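/- Let S be a Buchsbaum simplicial poset of dimension n-1 with reduced Betti numbers b~_p(S), and define f~_k(S) = Σ_{dim I = k} dim H~_{n-1-|I|}(lk_S I). Let χ¹_q = Σ_{p=0}^{n-1} (-1)^p binomial(p,q) f~_{n-p-1}(S). Then for q ≤ n-1, χ¹_q = (chi(S) - 1) binomial(n,q) + (-1)^q h_q(S). -/

import Mathlib

/-!
Write `f j` for the number of elements of rank `j`. For `I ≠ bot` of rank `r` only the Betti
number of the link in degree `n - r - 1` survives, so the Euler relation of the link reads
`b̃_{n-r-1}(lk I) = (-1)^n ∑_{J ≥ I} (-1)^(rank J)`. Summing over the elements of rank `r`, and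
using that an element of rank `j` lies above exactly `C(j, r)` of them (its lower interval is
boolean), gives `f̃_{r-1} = (-1)^n ∑_j (-1)^j C(j, r) f j`.

Defining `f̃_{-1}` by the same formula makes it `(-1)^n (1 - χ)`, and the binomial theorem turns
`∑_{p ≤ n} (-1)^p f̃_{n-p-1} (1 - x)^p` into the h-polynomial `∑_j f j x^j (1 - x)^(n-j)`.
Comparing the coefficients of `x^q` gives the formula.
-/

open Polynomial Finset

theorem neg_one_pow_mul_neg_one_pow {R : Type*} [Monoid R] [HasDistribNeg R] (n : ℕ) :
    (-1 : R) ^ n * (-1) ^ n = 1 := by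
  rw [← pow_add]
  exact Even.neg_one_pow ⟨n, rfl⟩

theorem neg_apply_neg_one_add_sum_eq_single {R : Type*} [CommRing R] (β : ℤ → R) {k n : ℕ}
    (hk : k ≤ n) (hβ : ∀ i : ℤ, i ≠ n - k - 1 → β i = 0) :
    -β (-1) + ∑ i ∈ range (n + 1), (-1) ^ i * β i = -(-1) ^ (n - k) * β (n - k - 1) := by
  rcases hk.eq_or_lt with rfl | hlt
  · rw [sum_eq_zero fun i _ => by rw [hβ i (by omega), mul_zero]]
    simp
  · obtain ⟨m, rfl⟩ := Nat.exists_eq_add_of_lt hlt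
    rw [hβ (-1) (by omega), sum_eq_single m (fun i _ hi => by rw [hβ i (by omega), mul_zero])
      (by simp; omega), show k + m + 1 - k = m + 1 by omega,
      show ((k + m + 1 : ℕ) : ℤ) - k - 1 = m by push_cast; ring]
    ring

/-- `f̃_{r-1}` of a Buchsbaum poset of rank `n`, computed from its face numbers
`f j = #{I | rank I = j}`. -/
def fTilde {R : Type*} [CommRing R] (n : ℕ) (f : ℕ → R) (r : ℕ) : R :=
  (-1) ^ n * ∑ j ∈ range (n + 1), (-1) ^ j * j.choose r * f j

section SimplicialPoset

variable {α : Type*} [PartialOrder α] [Fintype α] {rank : α → ℕ}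

def HasBooleanLowerIntervals (rank : α → ℕ) : Prop :=
  ∀ I : α, Nonempty ({J : α // J ≤ I} ≃o Finset (Fin (rank I)))

-- Both sides are `log₂` of the number of elements below `K`.
theorem rank_eq_card_of_le (hbool : HasBooleanLowerIntervals rank) {J K : α} {m : ℕ}
    (e : {I : α // I ≤ J} ≃o Finset (Fin m)) (hK : K ≤ J) :
    rank K = (e ⟨K, hK⟩).card := by
  classical
  have hrank : Fintype.card {I : α // I ≤ K} = 2 ^ rank K := by
    simp [Fintype.card_congr (hbool K).some.toEquiv]
  have hcard : Fintype.card {I : α // I ≤ K} = 2 ^ (e ⟨K, hK⟩).card := by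
    rw [← card_powerset, ← Iic_eq_powerset, ← Fintype.card_coe]
    refine Fintype.card_congr ((Equiv.subtypeSubtypeEquivSubtype fun h => h.trans hK).symm.trans
      (e.toEquiv.subtypeEquiv fun I => ?_))
    simp [← Subtype.coe_le_coe]
  exact Nat.pow_right_injective le_rfl (hrank.symm.trans hcard)

theorem card_filter_le_rank_eq [DecidableLE α] (hbool : HasBooleanLowerIntervals rank)
    (J : α) (r : ℕ) :
    #{I | I ≤ J ∧ rank I = r} = (rank J).choose r := by
  obtain ⟨e⟩ := hbool J
  rw [← Fintype.card_subtype, ← Fintype.card_fin (rank J), ← Fintype.card_finset_len]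
  refine Fintype.card_congr
    ((Equiv.subtypeSubtypeEquivSubtypeInter _ fun I => rank I = r).symm.trans
      (e.toEquiv.subtypeEquiv fun I => ?_))
  simp [rank_eq_card_of_le hbool e I.2]

theorem card_filter_rank_eq_zero {bot : α} (hbot : ∀ I, bot ≤ I) (hrankbot : rank bot = 0)
    (hmono : ∀ I J : α, I < J → rank I < rank J) : #{I | rank I = 0} = 1 := by
  rw [card_eq_one]
  refine ⟨bot, eq_singleton_iff_unique_mem.mpr ⟨by simpa using hrankbot, fun I hI => ?_⟩⟩
  by_contra hne
  have := hmono bot I ((hbot I).lt_of_ne (Ne.symm hne))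
  simp_all

variable [DecidableLE α]

theorem sum_sum_le_eq_sum_choose_mul_card {M : Type*} [AddCommMonoid M]
    (hbool : HasBooleanLowerIntervals rank) {n : ℕ} (hdim : ∀ I, rank I ≤ n) (r : ℕ)
    (g : ℕ → M) :
    ∑ I with rank I = r, ∑ J with I ≤ J, g (rank J)
      = ∑ j ∈ range (n + 1), (j.choose r * #{I | rank I = j}) • g j := by
  rw [sum_comm' (t' := univ) (s' := fun J => {I | I ≤ J ∧ rank I = r}) (by simp; tauto)]
  simp only [sum_const, card_filter_le_rank_eq hbool]
  rw [← sum_fiberwise_of_maps_to (g := rank) (t := range (n + 1)) (by simp [hdim])]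
  refine sum_congr rfl fun j _ => ?_
  rw [mul_comm, mul_smul, ← sum_const]
  exact sum_congr rfl fun J hJ => by rw [(mem_filter.mp hJ).2]

theorem sum_lt_neg_one_pow_sub_one [DecidableLT α] {R : Type*} [CommRing R]
    (hmono : ∀ I J : α, I < J → rank I < rank J) (I : α) :
    (∑ J with I < J, (-1 : R) ^ (rank J - rank I - 1)) - 1
      = -(-1) ^ rank I * ∑ J with I ≤ J, (-1) ^ rank J := by
  classical
  have hIci : univ.filter (I ≤ ·) = insert I (univ.filter (I < ·)) := by
    ext J
    simp [le_iff_eq_or_lt, @eq_comm _ I]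
  rw [hIci, sum_insert (by simp), mul_add, mul_sum, sub_eq_add_neg, add_comm, neg_mul,
    neg_one_pow_mul_neg_one_pow]
  congr 1
  refine sum_congr rfl fun J hJ => ?_
  obtain ⟨k, hk⟩ := Nat.exists_eq_add_of_lt (hmono I J (mem_filter.mp hJ).2)
  rw [hk, show rank I + k + 1 - rank I - 1 = k by omega, pow_succ, pow_add]
  linear_combination -(-1 : R) ^ k * neg_one_pow_mul_neg_one_pow (R := R) (rank I)

theorem betti_eq_sum_le_of_buchsbaum [DecidableLT α]
    (hmono : ∀ I J : α, I < J → rank I < rank J) {n : ℕ} (b : ℤ → ℕ) {I : α}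
    (hI : rank I ≤ n)
    (hBuch : ∀ i : ℤ, i ≠ (n : ℤ) - (rank I : ℤ) - 1 → b i = 0)
    (hEuler : (∑ J with I < J, (-1 : ℚ) ^ (rank J - rank I - 1)) - 1
        = -(b (-1) : ℚ) + ∑ i ∈ range (n + 1), (-1 : ℚ) ^ i * (b i : ℚ)) :
    (b (n - rank I - 1) : ℚ) = (-1) ^ n * ∑ J with I ≤ J, (-1) ^ rank J := by
  rw [sum_lt_neg_one_pow_sub_one hmono,
    neg_apply_neg_one_add_sum_eq_single (fun i => (b i : ℚ)) hI (by simpa using hBuch)] at hEuler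
  rw [show (-1 : ℚ) ^ n = (-1) ^ (n - rank I) * (-1) ^ rank I by
    rw [← pow_add, Nat.sub_add_cancel hI]]
  linear_combination (-1 : ℚ) ^ (n - rank I) * hEuler
    - (b (n - rank I - 1) : ℚ) * neg_one_pow_mul_neg_one_pow (R := ℚ) (n - rank I)

theorem sum_betti_eq_fTilde [DecidableLT α] (hbool : HasBooleanLowerIntervals rank) {bot : α}
    (hrankbot : rank bot = 0) (hmono : ∀ I J : α, I < J → rank I < rank J)
    {n : ℕ} (hdim : ∀ I, rank I ≤ n) (b : α → ℤ → ℕ)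
    (hBuch : ∀ I, I ≠ bot → ∀ i : ℤ, i ≠ (n : ℤ) - (rank I : ℤ) - 1 → b I i = 0)
    (hEuler : ∀ I, I ≠ bot →
      (∑ J with I < J, (-1 : ℚ) ^ (rank J - rank I - 1)) - 1
        = -(b I (-1) : ℚ) + ∑ i ∈ range (n + 1), (-1 : ℚ) ^ i * (b I (i : ℤ) : ℚ))
    {r : ℕ} (hr : 1 ≤ r) :
    ∑ I with rank I = r, (b I ((n : ℤ) - (rank I : ℤ) - 1) : ℚ)
      = fTilde n (fun j => (#{I | rank I = j} : ℚ)) r := by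
  have hbot : ∀ I, rank I = r → I ≠ bot := by rintro I hI rfl; omega
  rw [sum_congr rfl fun I hI => betti_eq_sum_le_of_buchsbaum hmono (b I) (hdim I)
      (hBuch I (hbot I (mem_filter.mp hI).2)) (hEuler I (hbot I (mem_filter.mp hI).2)),
    ← mul_sum, sum_sum_le_eq_sum_choose_mul_card hbool hdim r (fun j => (-1 : ℚ) ^ j), fTilde]
  simp only [nsmul_eq_mul]
  congr 1
  exact sum_congr rfl fun j _ => by push_cast; ring

end SimplicialPoset

section Binomial

variable {R : Type*} [CommRing R]

theorem sum_range_choose_sub_mul_pow (y : R) {j n : ℕ} (hj : j ≤ n) :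
    ∑ p ∈ range (n + 1), (j.choose (n - p) : R) * y ^ p = y ^ (n - j) * (y + 1) ^ j := by
  calc ∑ p ∈ range (n + 1), (j.choose (n - p) : R) * y ^ p
      = ∑ k ∈ range (n + 1), (j.choose k : R) * y ^ (n - k) := by
        rw [← sum_range_reflect]
        refine sum_congr rfl fun k hk => ?_
        rw [mem_range] at hk
        rw [show n + 1 - 1 - k = n - k by omega, show n - (n - k) = k by omega]
    _ = ∑ k ∈ range (j + 1), (j.choose k : R) * y ^ (n - k) := by
        refine (sum_subset (range_subset_range.2 (by omega)) fun k _ hk => ?_).symm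
        rw [mem_range, not_lt] at hk
        rw [Nat.choose_eq_zero_of_lt (by omega), Nat.cast_zero, zero_mul]
    _ = y ^ (n - j) * (y + 1) ^ j := by
        rw [add_comm y 1, add_pow, mul_sum]
        refine sum_congr rfl fun k hk => ?_
        rw [mem_range] at hk
        rw [one_pow, one_mul, ← mul_assoc, ← pow_add, show n - j + (j - k) = n - k by omega,
          mul_comm]

theorem sum_range_neg_one_pow_mul_fTilde_mul_one_sub_pow (f : ℕ → R) (x : R) (n : ℕ) :
    ∑ p ∈ range (n + 1), (-1) ^ p * fTilde n f (n - p) * (1 - x) ^ p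
      = ∑ j ∈ range (n + 1), f j * x ^ j * (1 - x) ^ (n - j) := by
  have hterm : ∀ j ∈ range (n + 1),
      (-1) ^ n * (-1) ^ j * ∑ p ∈ range (n + 1), (j.choose (n - p) : R) * (x - 1) ^ p
        = x ^ j * (1 - x) ^ (n - j) := by
    intro j hj
    obtain ⟨m, rfl⟩ := Nat.exists_eq_add_of_le (Nat.lt_succ_iff.mp (mem_range.mp hj))
    rw [sum_range_choose_sub_mul_pow _ (Nat.le_add_right j m), sub_add_cancel,
      add_tsub_cancel_left, pow_add, show 1 - x = -1 * (x - 1) by ring, mul_pow]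
    linear_combination (-1 : R) ^ m * (x - 1) ^ m * x ^ j * neg_one_pow_mul_neg_one_pow (R := R) j
  calc _ = ∑ p ∈ range (n + 1), ∑ j ∈ range (n + 1),
        f j * ((-1) ^ n * (-1) ^ j * ((j.choose (n - p) : R) * (x - 1) ^ p)) := by
        refine sum_congr rfl fun p _ => ?_
        simp only [fTilde, mul_sum, sum_mul]
        refine sum_congr rfl fun j _ => ?_
        rw [show x - 1 = -1 * (1 - x) by ring, mul_pow]
        ring
    _ = _ := by
        rw [sum_comm]
        refine sum_congr rfl fun j hj => ?_
        rw [← mul_sum, ← mul_sum, hterm j hj, mul_assoc]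

theorem coeff_one_sub_X_pow (p q : ℕ) :
    ((1 - X : R[X]) ^ p).coeff q = (-1) ^ q * p.choose q := by
  rw [show (1 - X : R[X]) = C (-1) * (X + C (-1)) by simp; ring, mul_pow, ← C_pow, coeff_C_mul,
    coeff_X_add_C_pow]
  rcases le_or_gt q p with hqp | hpq
  · obtain ⟨m, rfl⟩ := Nat.exists_eq_add_of_le hqp
    rw [add_tsub_cancel_left, pow_add]
    linear_combination
      (-1 : R) ^ q * ((q + m).choose q : R) * neg_one_pow_mul_neg_one_pow (R := R) m
  · simp [Nat.choose_eq_zero_of_lt hpq]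

theorem neg_one_pow_mul_h_eq_sum_fTilde {n : ℕ} {f h : ℕ → R}
    (hdef : ∑ i ∈ range (n + 1), C (h i) * X ^ i
      = ∑ i ∈ range (n + 1), C (f i) * X ^ i * (1 - X) ^ (n - i)) {q : ℕ} (hq : q ≤ n) :
    (-1) ^ q * h q = ∑ p ∈ range (n + 1), (-1) ^ p * p.choose q * fTilde n f (n - p) := by
  have hcoeff := congrArg (coeff · q)
    (hdef.trans (sum_range_neg_one_pow_mul_fTilde_mul_one_sub_pow (fun j => C (f j)) X n).symm)
  have hC : ∀ p,
      (-1) ^ p * fTilde n (fun j => C (f j)) (n - p) = C ((-1) ^ p * fTilde n f (n - p)) := by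
    simp [fTilde]
  simp only [finsetSum_coeff, hC, coeff_C_mul, coeff_X_pow, mul_ite, mul_one, mul_zero, sum_ite_eq,
    coeff_one_sub_X_pow] at hcoeff
  rw [if_pos (mem_range.2 (Nat.lt_succ_of_le hq))] at hcoeff
  rw [hcoeff, mul_sum]
  refine sum_congr rfl fun p _ => ?_
  linear_combination
    (-1) ^ p * p.choose q * fTilde n f (n - p) * neg_one_pow_mul_neg_one_pow (R := R) q

end Binomial

theorem chi_one_formula_general {α : Type} [Fintype α] [PartialOrder α]
    [DecidableRel ((· < ·) : α → α → Prop)]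
    (rank : α → ℕ) (bot : α) (hbot : ∀ I, bot ≤ I) (hrankbot : rank bot = 0)
    (hbool : ∀ I : α, Nonempty ({J : α // J ≤ I} ≃o Finset (Fin (rank I))))
    (hmono : ∀ I J : α, I < J → rank I < rank J)
    (n : ℕ)
    (hdim : ∀ I, rank I ≤ n)
    (b : α → ℤ → ℕ)
    (hBuch : ∀ I, I ≠ bot → ∀ i : ℤ, i ≠ (n : ℤ) - (rank I : ℤ) - 1 → b I i = 0)
    (hEuler : ∀ I, I ≠ bot →
      (∑ J ∈ Finset.univ.filter (fun J : α => I < J), (-1 : ℚ) ^ (rank J - rank I - 1)) - 1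
        = -(b I (-1) : ℚ) + ∑ i ∈ range (n + 1), (-1 : ℚ) ^ i * (b I (i : ℤ) : ℚ))
    (chi : ℚ)
    (hchi : chi = ∑ i ∈ range n, (-1 : ℚ) ^ i *
        ((Finset.univ.filter (fun I : α => rank I = i + 1)).card : ℚ))
    (h : ℕ → ℚ)
    (hdef : ∑ i ∈ range (n + 1), C (h i) * X ^ i
      = ∑ i ∈ range (n + 1),
          C (((Finset.univ.filter (fun I : α => rank I = i)).card : ℚ)) * X ^ i * (1 - X) ^ (n - i)) :
    ∀ q < n,
      (∑ p ∈ range n, (-1 : ℚ) ^ p * (p.choose q : ℚ) *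
          (∑ I ∈ Finset.univ.filter (fun I : α => rank I = (n - p - 1) + 1),
            (b I ((n : ℤ) - (rank I : ℤ) - 1) : ℚ)))
        = (chi - 1) * (n.choose q : ℚ) + (-1 : ℚ) ^ q * h q := by
  classical
  intro q hq
  set f : ℕ → ℚ := fun j => (#{I | rank I = j} : ℚ)
  have hbetti : ∀ p ∈ range n,
      ∑ I with rank I = n - p - 1 + 1, (b I (n - rank I - 1) : ℚ) = fTilde n f (n - p) := by
    intro p hp
    rw [mem_range] at hp
    rw [show n - p - 1 + 1 = n - p by omega]
    exact sum_betti_eq_fTilde hbool hrankbot hmono hdim b hBuch hEuler (by omega)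
  have heuler : fTilde n f 0 = (-1) ^ n * (1 - chi) := by
    rw [fTilde, sum_range_succ', hchi]
    simp only [f, card_filter_rank_eq_zero hbot hrankbot hmono, pow_succ, pow_zero, mul_neg_one,
      neg_mul, sum_neg_distrib, Nat.choose_zero_right, Nat.cast_one, mul_one]
    ring
  have hh := neg_one_pow_mul_h_eq_sum_fTilde hdef hq.le
  rw [sum_range_succ, ← sum_congr rfl fun p hp => congrArg _ (hbetti p hp), Nat.sub_self,
    heuler] at hh
  linear_combination -hh - (n.choose q : ℚ) * (1 - chi) * neg_one_pow_mul_neg_one_pow (R := ℚ) n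

/-- Let `S` be a Buchsbaum simplicial poset of dimension `n-1`, with
`f~_k(S) = ∑_{dim I = k} dim H~_{n-1-|I|}(lk_S I)` and
`χ¹_q = ∑_{p=0}^{n-1} (-1)^p C(p,q) f~_{n-p-1}(S)`.  Then for all `q ≤ n-1`,
`χ¹_q = (χ(S) - 1) C(n,q) + (-1)^q h_q(S)`. -/
theorem chi_one_formula {α : Type} [Fintype α] [PartialOrder α] [DecidableEq α]
    [DecidableRel ((· < ·) : α → α → Prop)]
    (rank : α → ℕ) (bot : α) (hbot : ∀ I, bot ≤ I) (hrankbot : rank bot = 0)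
    (hbool : ∀ I : α, Nonempty ({J : α // J ≤ I} ≃o Finset (Fin (rank I))))
    (hmono : ∀ I J : α, I < J → rank I < rank J)
    (n : ℕ)
    (hdim : ∀ I, rank I ≤ n)
    (hdimtop : ∃ I, rank I = n)
    (b : α → ℤ → ℕ)
    (hBuch : ∀ I, I ≠ bot → ∀ i : ℤ, i ≠ (n : ℤ) - (rank I : ℤ) - 1 → b I i = 0)
    (hEuler : ∀ I, I ≠ bot →
      (∑ J ∈ Finset.univ.filter (fun J : α => I < J), (-1 : ℚ) ^ (rank J - rank I - 1)) - 1
        = -(b I (-1) : ℚ) + ∑ i ∈ range (n + 1), (-1 : ℚ) ^ i * (b I (i : ℤ) : ℚ))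
    (chi : ℚ)
    (hchi : chi = ∑ i ∈ range n, (-1 : ℚ) ^ i *
        ((Finset.univ.filter (fun I : α => rank I = i + 1)).card : ℚ))
    (h : ℕ → ℚ)
    (hdef : ∑ i ∈ range (n + 1), C (h i) * X ^ i
      = ∑ i ∈ range (n + 1),
          C (((Finset.univ.filter (fun I : α => rank I = i)).card : ℚ)) * X ^ i * (1 - X) ^ (n - i)) :
    ∀ q < n,
      (∑ p ∈ range n, (-1 : ℚ) ^ p * (p.choose q : ℚ) *
          (∑ I ∈ Finset.univ.filter (fun I : α => rank I = (n - p - 1) + 1),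
            (b I ((n : ℤ) - (rank I : ℤ) - 1) : ℚ)))
        = (chi - 1) * (n.choose q : ℚ) + (-1 : ℚ) ^ q * h q :=
  chi_one_formula_general rank bot hbot hrankbot hbool hmono n hdim b hBuch hEuler chi hchi h hdef
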